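/- arXiv:2311.01910 — 6 statements merged into one kernel-verified Lean document; each statement's English description precedes it below -/
import Mathlib

section
/- No boundary equilibrium (Lemma on boundary equilibria, part I): if m > r·(b+k)²/(4k), then there is no x > 0 with r·(1 − x/k) − m/(x+b) = 0; equivalently, system (A1) has no equilibrium of the form (x, 0) with x > 0. -/
/-! Clearing denominators, `r (1 - x/k) - m/(x+b)` has the sign of `r (k - x)(x + b) - m k`.
By AM-GM the product `(k - x)(x + b)` never exceeds `(k + b)² / 4`, so under the hypothesis
on `m` this numerator is negative for every `x > -b`. -/

theorem logistic_sub_harvest_neg {K : Type*} [Field K] [LinearOrder K] [IsStrictOrderedRing K]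
    {r k m b x : K} (hr : 0 ≤ r) (hk : 0 < k) (hxb : 0 < x + b)
    (hm : r * (b + k) ^ 2 / (4 * k) < m) :
    r * (1 - x / k) - m / (x + b) < 0 := by
  have hamgm : 4 * ((k - x) * (x + b)) ≤ (b + k) ^ 2 := by
    have h := four_mul_le_sq_add (k - x) (x + b)
    rwa [mul_assoc, show k - x + (x + b) = b + k by ring] at h
  have hmk : r * (b + k) ^ 2 < 4 * (m * k) := by
    rw [div_lt_iff₀ (by positivity)] at hm
    linarith
  have hnum : r * ((k - x) * (x + b)) - m * k < 0 := by
    linarith [mul_le_mul_of_nonneg_left hamgm hr]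
  have hrewrite : r * (1 - x / k) - m / (x + b)
      = (r * ((k - x) * (x + b)) - m * k) / (k * (x + b)) := by
    field_simp
  rw [hrewrite]
  exact div_neg_of_neg_of_pos hnum (by positivity)

theorem no_boundary_equilibrium_general
    (r k m b : ℝ)
    (hr : 0 < r) (hk : 0 < k) (hb : 0 < b)
    (hbig : m > r * (b + k) ^ 2 / (4 * k)) :
    ∀ x > (0 : ℝ), r * (1 - x / k) - m / (x + b) ≠ 0 := fun x hx =>
  (logistic_sub_harvest_neg hr.le hk (by linarith) hbig).ne

/-- No boundary equilibrium: if `m > r·(b+k)²/(4k)` then there is no `x > 0` with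
`r·(1 - x/k) - m/(x+b) = 0`. -/
theorem no_boundary_equilibrium
    (r s k q a n m b c : ℝ)
    (hr : 0 < r) (hs : 0 < s) (hk : 0 < k) (hq : 0 < q) (ha : 0 < a)
    (hn : 0 < n) (hm : 0 < m) (hb : 0 < b) (hc : -2 * Real.sqrt a < c)
    (hbig : m > r * (b + k) ^ 2 / (4 * k)) :
    ∀ x > (0 : ℝ), r * (1 - x / k) - m / (x + b) ≠ 0 :=
  no_boundary_equilibrium_general r k m b hr hk hb hbig
end

section
/- Unique boundary equilibrium (Lemma on boundary equilibria, part II(iii)): if m < r·(b+k)²/(4k) and m < b·r, then x = ((k − b) + √((r·(b+k)² − 4·k·m)/r))/2 is the unique x > 0 satisfying r·(1 − x/k) − m/(x+b) = 0. -/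
/-! Clearing the denominator turns the equation into the monic quadratic
`x² - (k - b)x + k(m/r - b) = 0`. Its constant term, the product of the roots, is negative
because `m < b·r`, so exactly one root is positive, namely the larger one. -/

open Real

theorem eq_larger_root_iff_of_const_neg {p q x : ℝ} (hq : q < 0) (hx : 0 < x) :
    x ^ 2 - p * x + q = 0 ↔ x = (p + √(p ^ 2 - 4 * q)) / 2 := by
  have hdisc : discrim 1 (-p) q = √(p ^ 2 - 4 * q) * √(p ^ 2 - 4 * q) := by
    rw [mul_self_sqrt (by nlinarith), discrim]
    ring
  have hp : p < √(p ^ 2 - 4 * q) := lt_sqrt_of_sq_lt (by linarith)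
  rw [show x ^ 2 - p * x + q = 1 * (x * x) + -p * x + q by ring,
    quadratic_eq_zero_iff one_ne_zero hdisc, neg_neg, mul_one]
  constructor
  · rintro (h | h)
    · exact h
    · linarith
  · exact Or.inl

theorem boundary_eq_iff_quadratic {r k m b x : ℝ} (hr : r ≠ 0) (hk : k ≠ 0) (hxb : x + b ≠ 0) :
    r * (1 - x / k) - m / (x + b) = 0 ↔ x ^ 2 - (k - b) * x + k * (m / r - b) = 0 := by
  have hfactor : r * (1 - x / k) - m / (x + b) =
      -(r / (k * (x + b))) * (x ^ 2 - (k - b) * x + k * (m / r - b)) := by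
    field_simp
    ring
  rw [hfactor, mul_eq_zero, neg_eq_zero, div_eq_zero_iff, mul_eq_zero]
  simp [hr, hk, hxb]

theorem unique_boundary_equilibrium_general
    (r k m b : ℝ)
    (hr : 0 < r) (hk : 0 < k) (hb : 0 < b)
    (hbr : m < b * r) :
    ∀ x > (0 : ℝ),
      (r * (1 - x / k) - m / (x + b) = 0 ↔
        x = ((k - b) + Real.sqrt ((r * (b + k) ^ 2 - 4 * k * m) / r)) / 2) := by
  intro x hx
  have hconst : k * (m / r - b) < 0 :=
    mul_neg_of_pos_of_neg hk (by rw [sub_neg, div_lt_iff₀ hr]; exact hbr)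
  have hdisc : (k - b) ^ 2 - 4 * (k * (m / r - b)) = (r * (b + k) ^ 2 - 4 * k * m) / r := by
    field_simp
    ring
  rw [boundary_eq_iff_quadratic hr.ne' hk.ne' (by linarith),
    eq_larger_root_iff_of_const_neg hconst hx, hdisc]

/-- Unique boundary equilibrium: if `m < r·(b+k)²/(4k)` and `m < b·r`, then
`x = ((k - b) + √((r·(b+k)² - 4·k·m)/r))/2` is the unique positive root of
`r·(1 - x/k) - m/(x+b)`. -/
theorem unique_boundary_equilibrium
    (r s k q a n m b c : ℝ)
    (hr : 0 < r) (hs : 0 < s) (hk : 0 < k) (hq : 0 < q) (ha : 0 < a)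
    (hn : 0 < n) (hm : 0 < m) (hb : 0 < b) (hc : -2 * Real.sqrt a < c)
    (hlt : m < r * (b + k) ^ 2 / (4 * k)) (hbr : m < b * r) :
    ∀ x > (0 : ℝ),
      (r * (1 - x / k) - m / (x + b) = 0 ↔
        x = ((k - b) + Real.sqrt ((r * (b + k) ^ 2 - 4 * k * m) / r)) / 2) :=
  unique_boundary_equilibrium_general r k m b hr hk hb hbr
end

section
/- Linearized classification of the two boundary equilibria: assume b·r < m < r·(b+k)²/(4k) and k > b, and let x₁ = ((k − b) − √((r·(b+k)² − 4·k·m)/r))/2 and x₂ = ((k − b) + √((r·(b+k)² − 4·k·m)/r))/2 be the two positive roots of φ(x) := r·(1 − x/k) − m/(x+b). Then φ′(x₁) > 0 and φ′(x₂) < 0; consequently the Jacobian matrix of (f, g) at (x₁, 0) has the two positive eigenvalues x₁·φ′(x₁) and s (B₁ is an unstable node), while the Jacobian at (x₂, 0) has eigenvalues x₂·φ′(x₂) < 0 and s > 0 of opposite signs (B₂ is a saddle). -/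
/-!
At a root `x₀` of `φ` the prey equation `f x 0 = x φ(x)` has derivative `x₀ φ'(x₀)`, and `g`
vanishes on the axis `y = 0`, so the Jacobian at `(x₀, 0)` is upper triangular with diagonal
`x₀ φ'(x₀), s`. Writing a root as `x = (k - b + d) / 2` with `r d² = r (b + k)² - 4 k m`, the
root equation `r (k - x) (x + b) = k m` turns `φ'(x) = -r/k + m/(x + b)²` into
`-r d / (k (x + b))`. For the two roots `d = ∓√(…)`, and `0 < √(…) < k - b` (the upper bound
is `b r < m`), so both roots are positive and the signs of `φ'` are opposite.
-/

theorem Matrix.mem_spectrum_fin_two_of_upper {K : Type*} [Field K] (p w t : K) :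
    p ∈ spectrum K !![p, w; 0, t] ∧ t ∈ spectrum K !![p, w; 0, t] := by
  simp [spectrum.mem_iff, Matrix.isUnit_iff_isUnit_det, Matrix.det_fin_two,
    Matrix.algebraMap_eq_diagonal]

noncomputable def jacobianAt (f g : ℝ → ℝ → ℝ) (x y : ℝ) : Matrix (Fin 2) (Fin 2) ℝ :=
  !![deriv (fun x' => f x' y) x, deriv (fun y' => f x y') y;
     deriv (fun x' => g x' y) x, deriv (fun y' => g x y') y]

theorem deriv_id_mul_of_eq_zero {φ : ℝ → ℝ} {x : ℝ} (hφ : DifferentiableAt ℝ φ x)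
    (h0 : φ x = 0) : deriv (fun y => y * φ y) x = x * deriv φ x := by
  rw [deriv_fun_mul (c := fun y => y) differentiableAt_fun_id hφ, h0]
  simp

theorem deriv_logistic_at_zero (s K : ℝ) : deriv (fun y => s * y * (1 - y / K)) 0 = s := by
  have := ((hasDerivAt_id (0 : ℝ)).const_mul s).mul
    (((hasDerivAt_id (0 : ℝ)).div_const K).const_sub 1)
  exact this.deriv.trans (by simp)

theorem jacobianAt_mem_spectrum_of_root {φ K : ℝ → ℝ} {f g : ℝ → ℝ → ℝ} {x₀ s : ℝ}
    (hf : ∀ x, f x 0 = x * φ x) (hg : ∀ x y, g x y = s * y * (1 - y / K x))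
    (hφ : DifferentiableAt ℝ φ x₀) (h0 : φ x₀ = 0) :
    x₀ * deriv φ x₀ ∈ spectrum ℝ (jacobianAt f g x₀ 0) ∧ s ∈ spectrum ℝ (jacobianAt f g x₀ 0) := by
  simp only [jacobianAt, hf, hg, mul_zero, zero_mul, deriv_const', deriv_logistic_at_zero,
    deriv_id_mul_of_eq_zero hφ h0]
  exact Matrix.mem_spectrum_fin_two_of_upper _ _ _

noncomputable def preyGrowthRate (r k m b x : ℝ) : ℝ := r * (1 - x / k) - m / (x + b)

section
variable {r k m b x : ℝ}

theorem hasDerivAt_preyGrowthRate (hxb : x + b ≠ 0) :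
    HasDerivAt (preyGrowthRate r k m b) (-(r / k) + m / (x + b) ^ 2) x := by
  have := ((((hasDerivAt_id x).div_const k).const_sub 1).const_mul r).sub
    ((hasDerivAt_const x m).div ((hasDerivAt_id x).add_const b) hxb)
  exact this.congr_deriv (by simp; ring)

variable {d : ℝ} (hk : k ≠ 0) (hxb : x + b ≠ 0) (hd : r * d ^ 2 = r * (b + k) ^ 2 - 4 * k * m)
  (hx : x = (k - b + d) / 2)
include hk hxb hd hx

theorem preyGrowthRate_eq_zero : preyGrowthRate r k m b x = 0 := by
  rw [preyGrowthRate]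
  field_simp
  subst hx
  linear_combination (-1/4 : ℝ) * hd

theorem deriv_preyGrowthRate_eq : deriv (preyGrowthRate r k m b) x = -(r * d) / (k * (x + b)) := by
  rw [(hasDerivAt_preyGrowthRate hxb).deriv]
  field_simp
  subst hx
  linear_combination (1/4 : ℝ) * hd

theorem jacobianAt_mem_spectrum_of_preyGrowthRate_root {K : ℝ → ℝ} {f g : ℝ → ℝ → ℝ} {s : ℝ}
    (hf : ∀ x, f x 0 = x * preyGrowthRate r k m b x)
    (hg : ∀ x y, g x y = s * y * (1 - y / K x)) :
    x * deriv (preyGrowthRate r k m b) x ∈ spectrum ℝ (jacobianAt f g x 0) ∧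
      s ∈ spectrum ℝ (jacobianAt f g x 0) :=
  jacobianAt_mem_spectrum_of_root hf hg (hasDerivAt_preyGrowthRate hxb).differentiableAt
    (preyGrowthRate_eq_zero hk hxb hd hx)

end

section
variable {r k m b : ℝ} (hr : 0 < r) (hk : 0 < k)
include hr hk

theorem discriminant_pos (hlt : m < r * (b + k) ^ 2 / (4 * k)) :
    0 < (r * (b + k) ^ 2 - 4 * k * m) / r := by
  rw [lt_div_iff₀ (by positivity)] at hlt
  exact div_pos (by linarith) hr

theorem sqrt_discriminant_lt (hbr : b * r < m) (hkb : b < k) :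
    √((r * (b + k) ^ 2 - 4 * k * m) / r) < k - b := by
  rw [Real.sqrt_lt' (by linarith), div_lt_iff₀ hr]
  nlinarith [mul_pos hk (sub_pos.2 hbr)]

end

theorem boundary_equilibria_classification_general
    (r s k q a n m b c : ℝ)
    (hr : 0 < r) (hs : 0 < s) (hk : 0 < k)
    (hb : 0 < b)
    (hbr : b * r < m) (hlt : m < r * (b + k) ^ 2 / (4 * k)) (hkb : b < k)
    (φ : ℝ → ℝ) (hφ : φ = fun x => r * (1 - x / k) - m / (x + b))
    (f g : ℝ → ℝ → ℝ)
    (hf : f = fun x y => x * (r * (1 - x / k) - m / (x + b)) -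
        q * x * y / (x ^ 2 + c * x + a))
    (hg : g = fun x y => s * y * (1 - y / (n * x)))
    (x₁ x₂ : ℝ)
    (hx₁ : x₁ = ((k - b) - Real.sqrt ((r * (b + k) ^ 2 - 4 * k * m) / r)) / 2)
    (hx₂ : x₂ = ((k - b) + Real.sqrt ((r * (b + k) ^ 2 - 4 * k * m) / r)) / 2)
    (J₁ J₂ : Matrix (Fin 2) (Fin 2) ℝ)
    (hJ₁ : J₁ = !![deriv (fun x => f x 0) x₁, deriv (fun y => f x₁ y) 0;
                   deriv (fun x => g x 0) x₁, deriv (fun y => g x₁ y) 0])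
    (hJ₂ : J₂ = !![deriv (fun x => f x 0) x₂, deriv (fun y => f x₂ y) 0;
                   deriv (fun x => g x 0) x₂, deriv (fun y => g x₂ y) 0]) :
    0 < deriv φ x₁ ∧ deriv φ x₂ < 0 ∧
      (x₁ * deriv φ x₁ ∈ spectrum ℝ J₁ ∧ s ∈ spectrum ℝ J₁ ∧
        0 < x₁ * deriv φ x₁ ∧ 0 < s) ∧
      (x₂ * deriv φ x₂ ∈ spectrum ℝ J₂ ∧ s ∈ spectrum ℝ J₂ ∧
        x₂ * deriv φ x₂ < 0 ∧ 0 < s) := by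
  replace hφ : φ = preyGrowthRate r k m b := hφ
  set d := √((r * (b + k) ^ 2 - 4 * k * m) / r)
  have hD := discriminant_pos hr hk hlt
  have hd₀ : 0 < d := Real.sqrt_pos.2 hD
  have hdk : d < k - b := sqrt_discriminant_lt hr hk hbr hkb
  have hd : r * d ^ 2 = r * (b + k) ^ 2 - 4 * k * m := by
    rw [Real.sq_sqrt hD.le]; field_simp
  have hd' : r * (-d) ^ 2 = r * (b + k) ^ 2 - 4 * k * m := by rw [neg_sq, hd]
  replace hx₁ : x₁ = (k - b + -d) / 2 := by rw [hx₁]; ring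
  have hx₁₀ : 0 < x₁ := by rw [hx₁]; linarith
  have hx₂₀ : 0 < x₂ := by rw [hx₂]; linarith
  have hf0 : ∀ x, f x 0 = x * preyGrowthRate r k m b x := by simp [hf, preyGrowthRate]
  have hg' (x y : ℝ) : g x y = s * y * (1 - y / (n * x)) := by rw [hg]
  have hφ₁ : 0 < deriv φ x₁ := by
    rw [hφ, deriv_preyGrowthRate_eq hk.ne' (by linarith) hd' hx₁, neg_mul_eq_mul_neg, neg_neg]
    exact div_pos (mul_pos hr hd₀) (mul_pos hk (by linarith))
  have hφ₂ : deriv φ x₂ < 0 := by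
    rw [hφ, deriv_preyGrowthRate_eq hk.ne' (by linarith) hd hx₂]
    exact div_neg_of_neg_of_pos (neg_neg_of_pos (mul_pos hr hd₀)) (mul_pos hk (by linarith))
  obtain ⟨hμ₁, hs₁⟩ := jacobianAt_mem_spectrum_of_preyGrowthRate_root hk.ne' (by linarith) hd' hx₁
    hf0 hg'
  obtain ⟨hμ₂, hs₂⟩ := jacobianAt_mem_spectrum_of_preyGrowthRate_root hk.ne' (by linarith) hd hx₂
    hf0 hg'
  subst hφ hJ₁ hJ₂
  exact ⟨hφ₁, hφ₂, ⟨hμ₁, hs₁, mul_pos hx₁₀ hφ₁, hs⟩, ⟨hμ₂, hs₂, mul_neg_of_pos_of_neg hx₂₀ hφ₂, hs⟩⟩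

/-- Linearized classification of the two boundary equilibria: with
`b·r < m < r·(b+k)²/(4k)` and `k > b`, and `x₁ < x₂` the two positive roots of
`φ(x) = r·(1 - x/k) - m/(x+b)`, one has `φ′(x₁) > 0` and `φ′(x₂) < 0`; the Jacobian
matrix of `(f, g)` at `(x₁, 0)` has the two positive eigenvalues `x₁·φ′(x₁)` and `s`
(unstable node), while the Jacobian at `(x₂, 0)` has eigenvalues `x₂·φ′(x₂) < 0` and
`s > 0` of opposite signs (saddle). -/
theorem boundary_equilibria_classification
    (r s k q a n m b c : ℝ)
    (hr : 0 < r) (hs : 0 < s) (hk : 0 < k) (hq : 0 < q) (ha : 0 < a)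
    (hn : 0 < n) (hm : 0 < m) (hb : 0 < b) (hc : -2 * Real.sqrt a < c)
    (hbr : b * r < m) (hlt : m < r * (b + k) ^ 2 / (4 * k)) (hkb : b < k)
    (φ : ℝ → ℝ) (hφ : φ = fun x => r * (1 - x / k) - m / (x + b))
    (f g : ℝ → ℝ → ℝ)
    (hf : f = fun x y => x * (r * (1 - x / k) - m / (x + b)) -
        q * x * y / (x ^ 2 + c * x + a))
    (hg : g = fun x y => s * y * (1 - y / (n * x)))
    (x₁ x₂ : ℝ)
    (hx₁ : x₁ = ((k - b) - Real.sqrt ((r * (b + k) ^ 2 - 4 * k * m) / r)) / 2)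
    (hx₂ : x₂ = ((k - b) + Real.sqrt ((r * (b + k) ^ 2 - 4 * k * m) / r)) / 2)
    (J₁ J₂ : Matrix (Fin 2) (Fin 2) ℝ)
    (hJ₁ : J₁ = !![deriv (fun x => f x 0) x₁, deriv (fun y => f x₁ y) 0;
                   deriv (fun x => g x 0) x₁, deriv (fun y => g x₁ y) 0])
    (hJ₂ : J₂ = !![deriv (fun x => f x 0) x₂, deriv (fun y => f x₂ y) 0;
                   deriv (fun x => g x 0) x₂, deriv (fun y => g x₂ y) 0]) :
    0 < deriv φ x₁ ∧ deriv φ x₂ < 0 ∧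
      (x₁ * deriv φ x₁ ∈ spectrum ℝ J₁ ∧ s ∈ spectrum ℝ J₁ ∧
        0 < x₁ * deriv φ x₁ ∧ 0 < s) ∧
      (x₂ * deriv φ x₂ ∈ spectrum ℝ J₂ ∧ s ∈ spectrum ℝ J₂ ∧
        x₂ * deriv φ x₂ < 0 ∧ 0 < s) :=
  boundary_equilibria_classification_general r s k q a n m b c hr hs hk hb hbr hlt hkb φ hφ f g hf
    hg x₁ x₂ hx₁ hx₂ J₁ J₂ hJ₁ hJ₂
end

section
/- Key estimates for positive invariance of Γ₂ = {(x,y) : 0 < x ≤ k, 0 ≤ y ≤ n·k} (Lemma 2.2): (i) for every x > k and every y ≥ 0, f(x,y) < 0; (ii) for every x with 0 < x ≤ k and every y > n·k, g(x,y) < 0; (iii) for every x > 0, g(x, 0) = 0. -/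
lemma quadratic_pos_of_neg_two_sqrt_lt {a c x : ℝ} (ha : 0 ≤ a) (hc : -2 * √a < c) (hx : 0 < x) :
    0 < x ^ 2 + c * x + a := by
  have hsq : √a ^ 2 = a := Real.sq_sqrt ha
  have hcx : -2 * √a * x < c * x := mul_lt_mul_of_pos_right hc hx
  nlinarith [sq_nonneg (x - √a)]

lemma allee_growth_rate_neg_of_lt {r k m b x : ℝ} (hr : 0 < r) (hk : 0 < k) (hm : 0 ≤ m)
    (hxb : 0 < x + b) (hx : k < x) : r * (1 - x / k) - m / (x + b) < 0 := by
  have hlogistic : r * (1 - x / k) < 0 :=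
    mul_neg_of_pos_of_neg hr (sub_neg.mpr ((one_lt_div hk).mpr hx))
  have hallee : 0 ≤ m / (x + b) := div_nonneg hm hxb.le
  linarith

lemma logistic_neg_of_lt {s K y : ℝ} (hs : 0 < s) (hK : 0 < K) (hy : K < y) :
    s * y * (1 - y / K) < 0 :=
  mul_neg_of_pos_of_neg (mul_pos hs (hK.trans hy)) (sub_neg.mpr ((one_lt_div hK).mpr hy))

/-- Key estimates for positive invariance of `Γ₂ = {(x,y) : 0 < x ≤ k, 0 ≤ y ≤ n·k}`:
(i) `f x y < 0` for `x > k`, `y ≥ 0`; (ii) `g x y < 0` for `0 < x ≤ k`, `y > n·k`;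
(iii) `g x 0 = 0` for `x > 0`. -/
theorem invariance_estimates
    (r s k q a n m b c : ℝ)
    (hr : 0 < r) (hs : 0 < s) (hk : 0 < k) (hq : 0 < q) (ha : 0 < a)
    (hn : 0 < n) (hm : 0 < m) (hb : 0 < b) (hc : -2 * Real.sqrt a < c)
    (f g : ℝ → ℝ → ℝ)
    (hf : f = fun x y => x * (r * (1 - x / k) - m / (x + b)) -
        q * x * y / (x ^ 2 + c * x + a))
    (hg : g = fun x y => s * y * (1 - y / (n * x))) :
    (∀ x > k, ∀ y ≥ (0 : ℝ), f x y < 0) ∧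
      (∀ x, 0 < x → x ≤ k → ∀ y > n * k, g x y < 0) ∧
      (∀ x > (0 : ℝ), g x 0 = 0) := by
  subst hf hg
  refine ⟨fun x hx y hy => ?_, fun x hx hxk y hy => ?_, fun x _ => by simp⟩
  · have hx0 : 0 < x := hk.trans hx
    have hgrowth : x * (r * (1 - x / k) - m / (x + b)) < 0 :=
      mul_neg_of_pos_of_neg hx0 (allee_growth_rate_neg_of_lt hr hk hm.le (by linarith) hx)
    have hpredation : 0 ≤ q * x * y / (x ^ 2 + c * x + a) :=
      div_nonneg (by positivity) (quadratic_pos_of_neg_two_sqrt_lt ha.le hc hx0).le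
    dsimp only
    linarith
  · have hcapacity : n * x < y := (mul_le_mul_of_nonneg_left hxk hn.le).trans_lt hy
    exact logistic_neg_of_lt hs (mul_pos hn hx) hcapacity
end

section
/- Root counting, case C₁ᵦ of Appendix A: let F̄(x) = a₄x⁴ + a₃x³ + a₂x² + a₁x + a₀ with a₄ > 0. If 9·a₃² − 24·a₂·a₄ < 0 and a₁ < 0, then the derivative F̄′ has exactly one root x̂₁ in (0, ∞). Moreover: if a₀ > 0, then F̄ has exactly two roots in (0, ∞) when F̄(x̂₁) < 0, exactly one root in (0, ∞) when F̄(x̂₁) = 0, and no root in (0, ∞) when F̄(x̂₁) > 0; and if a₀ ≤ 0, then F̄ has exactly one root in (0, ∞). -/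
/-!
`F̄''(x) = 12a₄x² + 6a₃x + 2a₂` has discriminant `4(9a₃² − 24a₂a₄) < 0`, so `F̄''` is positive
and `F̄'` is strictly increasing. As `F̄'(0) = a₁ < 0` and `F̄ → ∞`, `F̄'` has a single positive
zero `x̂`, and `F̄` strictly decreases on `[0, x̂]` and strictly increases on `[x̂, ∞)`. The
positive roots of such a valley-shaped continuous function are counted by the signs of
`F̄(0) = a₀` and `F̄(x̂)`, with the intermediate value theorem on each side of `x̂`.
-/

open Set Filter Polynomial

lemma quadratic_pos_of_discrim_neg {a b c : ℝ} (ha : 0 < a) (h : discrim a b c < 0) (x : ℝ) :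
    0 < a * (x * x) + b * x + c := by
  have hsq : 4 * a * (a * (x * x) + b * x + c) = (2 * a * x + b) ^ 2 - discrim a b c := by
    rw [discrim]; ring
  nlinarith [sq_nonneg (2 * a * x + b)]

section

variable {f : ℝ → ℝ}

lemma exists_gt_apply_eq_zero_of_tendsto_atTop (hf : Continuous f)
    (htop : Tendsto f atTop atTop) {a : ℝ} (ha : f a < 0) : ∃ y, a < y ∧ f y = 0 := by
  obtain ⟨z, haz, hfz⟩ := ((eventually_gt_atTop a).and (htop.eventually_gt_atTop 0)).exists
  obtain ⟨y, hy, hfy⟩ := intermediate_value_Ioo haz.le hf.continuousOn ⟨ha, hfz⟩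
  exact ⟨y, hy.1, hfy⟩

lemma exists_deriv_pos_of_tendsto_atTop (hf : Differentiable ℝ f)
    (htop : Tendsto f atTop atTop) (a : ℝ) : ∃ b, a < b ∧ 0 < deriv f b := by
  by_contra! hnonpos
  have hanti : AntitoneOn f (Ici a) :=
    antitoneOn_of_deriv_nonpos (convex_Ici a) hf.continuous.continuousOn hf.differentiableOn
      fun x hx => hnonpos x (by rwa [interior_Ici] at hx)
  obtain ⟨x, hxa, hfx⟩ := ((eventually_ge_atTop a).and (htop.eventually_gt_atTop (f a))).exists
  exact (hanti self_mem_Ici hxa hxa).not_gt hfx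

/-- The positive zero exists by Darboux's theorem, as `deriv f` need not be continuous. -/
lemma existsUnique_pos_deriv_eq_zero (hf : Differentiable ℝ f) (hmono : StrictMono (deriv f))
    (h0 : deriv f 0 < 0) (htop : Tendsto f atTop atTop) : ∃! x, 0 < x ∧ deriv f x = 0 := by
  obtain ⟨b, hb, hfb⟩ := exists_deriv_pos_of_tendsto_atTop hf htop 0
  obtain ⟨x, hx, hfx⟩ := (ordConnected_Icc (a := 0) (b := b)).image_deriv (fun x _ => hf x)
    |>.out (mem_image_of_mem _ ⟨le_rfl, hb.le⟩) (mem_image_of_mem _ ⟨hb.le, le_rfl⟩)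
    ⟨h0.le, hfb.le⟩
  refine ⟨x, ⟨hx.1.lt_of_ne ?_, hfx⟩, fun y hy => hmono.injective (hy.2.trans hfx.symm)⟩
  rintro rfl
  exact h0.ne hfx

end

structure IsValley (f : ℝ → ℝ) (c : ℝ) : Prop where
  pos : 0 < c
  strictAntiOn : StrictAntiOn f (Icc 0 c)
  strictMonoOn : StrictMonoOn f (Ici c)

namespace IsValley

variable {f : ℝ → ℝ} {c : ℝ}

lemma of_deriv_eq_zero (hf : Continuous f) (hmono : StrictMono (deriv f)) (hc0 : 0 < c)
    (hc : deriv f c = 0) : IsValley f c where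
  pos := hc0
  strictAntiOn := strictAntiOn_of_deriv_neg (convex_Icc 0 c) hf.continuousOn fun x hx => by
    rw [interior_Icc] at hx
    exact hc ▸ hmono hx.2
  strictMonoOn := strictMonoOn_of_deriv_pos (convex_Ici c) hf.continuousOn fun x hx => by
    rw [interior_Ici] at hx
    exact hc ▸ hmono hx

lemma apply_lt_of_ne (hv : IsValley f c) {x : ℝ} (hx : 0 ≤ x) (hxc : x ≠ c) : f c < f x := by
  rcases hxc.lt_or_gt with hlt | hgt
  · exact hv.strictAntiOn ⟨hx, hlt.le⟩ ⟨hx.trans hlt.le, le_rfl⟩ hlt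
  · exact hv.strictMonoOn self_mem_Ici hgt.le hgt

lemma eq_of_root_of_le (hv : IsValley f c) {x y : ℝ} (hx : 0 ≤ x) (hxc : x ≤ c) (hy : 0 ≤ y)
    (hyc : y ≤ c) (hfx : f x = 0) (hfy : f y = 0) : x = y :=
  hv.strictAntiOn.injOn ⟨hx, hxc⟩ ⟨hy, hyc⟩ (hfx.trans hfy.symm)

lemma eq_of_root_of_ge (hv : IsValley f c) {x y : ℝ} (hxc : c ≤ x) (hyc : c ≤ y) (hfx : f x = 0)
    (hfy : f y = 0) : x = y :=
  hv.strictMonoOn.injOn hxc hyc (hfx.trans hfy.symm)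

lemma existsUnique_root_of_apply_eq_zero (hv : IsValley f c) (hc : f c = 0) :
    ∃! x, 0 < x ∧ f x = 0 := by
  refine ⟨c, ⟨hv.pos, hc⟩, fun x ⟨hx, hfx⟩ => ?_⟩
  by_contra hxc
  exact (hv.apply_lt_of_ne hx.le hxc).ne (hc.trans hfx.symm)

lemma apply_ne_zero_of_apply_pos (hv : IsValley f c) (hc : 0 < f c) {x : ℝ} (hx : 0 < x) :
    f x ≠ 0 := by
  rcases eq_or_ne x c with rfl | hxc
  · exact hc.ne'
  · exact (hc.trans (hv.apply_lt_of_ne hx.le hxc)).ne'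

lemma exists_two_roots (hv : IsValley f c) (hf : Continuous f) (htop : Tendsto f atTop atTop)
    (h0 : 0 < f 0) (hc : f c < 0) :
    ∃ y₁ y₂, 0 < y₁ ∧ y₁ < y₂ ∧ f y₁ = 0 ∧ f y₂ = 0 ∧
      ∀ x, 0 < x → f x = 0 → x = y₁ ∨ x = y₂ := by
  obtain ⟨y₁, hy₁, hfy₁⟩ := intermediate_value_Ioo' hv.pos.le hf.continuousOn ⟨hc, h0⟩
  obtain ⟨y₂, hy₂, hfy₂⟩ := exists_gt_apply_eq_zero_of_tendsto_atTop hf htop hc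
  refine ⟨y₁, y₂, hy₁.1, hy₁.2.trans hy₂, hfy₁, hfy₂, fun x hx hfx => ?_⟩
  rcases le_total x c with hxc | hxc
  · exact .inl (hv.eq_of_root_of_le hx.le hxc hy₁.1.le hy₁.2.le hfx hfy₁)
  · exact .inr (hv.eq_of_root_of_ge hxc hy₂.le hfx hfy₂)

lemma existsUnique_root_of_apply_zero_nonpos (hv : IsValley f c) (hf : Continuous f)
    (htop : Tendsto f atTop atTop) (h0 : f 0 ≤ 0) : ∃! x, 0 < x ∧ f x = 0 := by
  have hc : f c < 0 := (hv.apply_lt_of_ne le_rfl hv.pos.ne).trans_le h0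
  obtain ⟨y, hy, hfy⟩ := exists_gt_apply_eq_zero_of_tendsto_atTop hf htop hc
  refine ⟨y, ⟨hv.pos.trans hy, hfy⟩, fun x ⟨hx, hfx⟩ => ?_⟩
  have hxc : c < x := by
    by_contra! hxc
    have hlt := hv.strictAntiOn ⟨le_rfl, hv.pos.le⟩ ⟨hx.le, hxc⟩ hx
    rw [hfx] at hlt
    exact hlt.not_ge h0
  exact hv.eq_of_root_of_ge hxc.le hy.le hfx hfy

end IsValley

/-- Root counting, case C₁ᵦ: if `a₄ > 0`, `9a₃² - 24a₂a₄ < 0` and `a₁ < 0`, then `F̄′`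
has exactly one positive root `xhat`; if `a₀ > 0` then `F̄` has exactly two positive roots
when `F̄(xhat) < 0`, exactly one when `F̄(xhat) = 0`, and none when `F̄(xhat) > 0`; and if
`a₀ ≤ 0` then `F̄` has exactly one positive root. -/
theorem quartic_case_C1b
    (a₀ a₁ a₂ a₃ a₄ : ℝ) (ha₄ : 0 < a₄)
    (Fbar : ℝ → ℝ)
    (hFbar : Fbar = fun x => a₄ * x ^ 4 + a₃ * x ^ 3 + a₂ * x ^ 2 + a₁ * x + a₀)
    (hdisc : 9 * a₃ ^ 2 - 24 * a₂ * a₄ < 0) (ha₁ : a₁ < 0) :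
    (∃! x, 0 < x ∧ deriv Fbar x = 0) ∧
      (∀ xhat, 0 < xhat → deriv Fbar xhat = 0 →
        ((0 < a₀ →
            (Fbar xhat < 0 →
              ∃ y₁ y₂, 0 < y₁ ∧ y₁ < y₂ ∧ Fbar y₁ = 0 ∧ Fbar y₂ = 0 ∧
                ∀ x, 0 < x → Fbar x = 0 → (x = y₁ ∨ x = y₂)) ∧
            (Fbar xhat = 0 → ∃! x, 0 < x ∧ Fbar x = 0) ∧
            (0 < Fbar xhat → ∀ x > (0 : ℝ), Fbar x ≠ 0)) ∧
          (a₀ ≤ 0 → ∃! x, 0 < x ∧ Fbar x = 0))) := by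
  set P : ℝ[X] := C a₄ * X ^ 4 + C a₃ * X ^ 3 + C a₂ * X ^ 2 + C a₁ * X + C a₀
  have hFP : Fbar = fun x => P.eval x := by simp [hFbar, P]
  have hP : P.natDegree = 4 := by
    simp only [P]
    compute_degree!
    exact ha₄.ne'
  have hcont : Continuous Fbar := hFP ▸ P.continuous
  have hdiff : Differentiable ℝ Fbar := hFP ▸ P.differentiable
  have htop : Tendsto Fbar atTop atTop := hFP ▸ P.tendsto_atTop_of_leadingCoeff_nonneg
    (natDegree_pos_iff_degree_pos.1 (by omega)) (by simp [leadingCoeff, hP, P, ha₄.le])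
  have hF' : deriv Fbar = fun x => P.derivative.eval x := funext fun x => hFP ▸ P.deriv
  have hF'0 : deriv Fbar 0 < 0 := by simpa [hF', P] using ha₁
  have hF'mono : StrictMono (deriv Fbar) := strictMono_of_deriv_pos fun x => by
    have hF'' : deriv (deriv Fbar) x = 12 * a₄ * (x * x) + 6 * a₃ * x + 2 * a₂ := by
      rw [hF', Polynomial.deriv]
      simp only [P, derivative_mul, derivative_C, zero_mul, derivative_X_pow_succ,
        Nat.cast_ofNat, map_add, map_one, zero_add, Nat.cast_one, pow_one, derivative_X, mul_one,
        add_zero, derivative_one, eval_add, eval_mul, eval_C, eval_one, eval_pow, eval_X]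
      ring
    exact hF'' ▸ quadratic_pos_of_discrim_neg (by positivity) (by rw [discrim]; linarith) x
  refine ⟨existsUnique_pos_deriv_eq_zero hdiff hF'mono hF'0 htop, fun xhat hxhat hcrit => ?_⟩
  have hv := IsValley.of_deriv_eq_zero hcont hF'mono hxhat hcrit
  have hF0 : Fbar 0 = a₀ := by simp [hFbar]
  exact ⟨fun ha₀ => ⟨hv.exists_two_roots hcont htop (hF0 ▸ ha₀),
      hv.existsUnique_root_of_apply_eq_zero, fun hpos _ => hv.apply_ne_zero_of_apply_pos hpos⟩,
    fun ha₀ => hv.existsUnique_root_of_apply_zero_nonpos hcont htop (hF0 ▸ ha₀)⟩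
end

section
/- Root counting, case C₃ᵦ(I)(Iₐ)(i) of Appendix A (four positive equilibria): let F̄(x) = a₄x⁴ + a₃x³ + a₂x² + a₁x + a₀ with a₄ > 0, a₃ < 0, a₂ > 0, 9·a₃² − 24·a₂·a₄ > 0, a₁ < 0 and a₀ > 0. Suppose the derivative F̄′ has three roots x̂₃ < x̂₄ < x̂₅ in (0, ∞) with F̄(x̂₃) < 0, F̄(x̂₄) > 0 and F̄(x̂₅) < 0. Then F̄ has exactly four roots in (0, ∞): one in (0, x̂₃), one in (x̂₃, x̂₄), one in (x̂₄, x̂₅), and one in (x̂₅, ∞). -/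
/-!
The cubic `F̄′`, with leading coefficient `4a₄`, vanishes at the three distinct points
`x̂₃ < x̂₄ < x̂₅`, hence equals `4a₄(x - x̂₃)(x - x̂₄)(x - x̂₅)`; so `F̄′` has constant sign on each
of `(0, x̂₃)`, `(x̂₃, x̂₄)`, `(x̂₄, x̂₅)`, `(x̂₅, ∞)` and `F̄` is strictly monotone there. The values
`F̄(0) = a₀ > 0`, `F̄(x̂₃) < 0`, `F̄(x̂₄) > 0`, `F̄(x̂₅) < 0` and `F̄ → ∞` alternate in sign, so the
intermediate value theorem gives a zero in each interval and monotonicity makes it unique.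
-/

open Set Filter Polynomial

theorem cubic_eq_mul_sub_mul_sub_mul_sub {K : Type*} [Field K] {c b a d r s t : K}
    (hrs : r ≠ s) (hst : s ≠ t) (hrt : r ≠ t)
    (hr : c * r ^ 3 + b * r ^ 2 + a * r + d = 0) (hs : c * s ^ 3 + b * s ^ 2 + a * s + d = 0)
    (ht : c * t ^ 3 + b * t ^ 2 + a * t + d = 0) (x : K) :
    c * x ^ 3 + b * x ^ 2 + a * x + d = c * (x - r) * (x - s) * (x - t) := by
  have hrs' : c * (r ^ 2 + r * s + s ^ 2) + b * (r + s) + a = 0 :=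
    (mul_eq_zero.mp (by linear_combination hr - hs : (r - s) * _ = 0)).resolve_left
      (sub_ne_zero.mpr hrs)
  have hst' : c * (s ^ 2 + s * t + t ^ 2) + b * (s + t) + a = 0 :=
    (mul_eq_zero.mp (by linear_combination hs - ht : (s - t) * _ = 0)).resolve_left
      (sub_ne_zero.mpr hst)
  have hb : c * (r + s + t) + b = 0 :=
    (mul_eq_zero.mp (by linear_combination hrs' - hst' : (r - t) * _ = 0)).resolve_left
      (sub_ne_zero.mpr hrt)
  linear_combination hr + (x - r) * ((x - s) * hb + hrs')

section ZeroCounting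

variable {f : ℝ → ℝ} {a b : ℝ}

theorem existsUnique_zero_of_injOn {s : Set ℝ} (hf : InjOn f s) (h : ∃ x ∈ s, f x = 0) :
    ∃! x, x ∈ s ∧ f x = 0 := by
  obtain ⟨x, hx, hx0⟩ := h
  exact ⟨x, ⟨hx, hx0⟩, fun y ⟨hy, hy0⟩ => hf hy hx (hy0.trans hx0.symm)⟩

theorem existsUnique_zero_Ioo_of_deriv_pos (hab : a < b) (hf : Continuous f)
    (hf' : ∀ x ∈ Ioo a b, 0 < deriv f x) (ha : f a < 0) (hb : 0 < f b) :
    ∃! x, x ∈ Ioo a b ∧ f x = 0 :=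
  existsUnique_zero_of_injOn
    ((strictMonoOn_of_deriv_pos (convex_Icc a b) hf.continuousOn
      (by rwa [interior_Icc])).injOn.mono Ioo_subset_Icc_self)
    (intermediate_value_Ioo hab.le hf.continuousOn ⟨ha, hb⟩)

theorem existsUnique_zero_Ioo_of_deriv_neg (hab : a < b) (hf : Continuous f)
    (hf' : ∀ x ∈ Ioo a b, deriv f x < 0) (ha : 0 < f a) (hb : f b < 0) :
    ∃! x, x ∈ Ioo a b ∧ f x = 0 :=
  existsUnique_zero_of_injOn
    ((strictAntiOn_of_deriv_neg (convex_Icc a b) hf.continuousOn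
      (by rwa [interior_Icc])).injOn.mono Ioo_subset_Icc_self)
    (intermediate_value_Ioo' hab.le hf.continuousOn ⟨hb, ha⟩)

theorem existsUnique_zero_Ioi_of_deriv_pos (hf : Continuous f)
    (hf' : ∀ x ∈ Ioi a, 0 < deriv f x) (ha : f a < 0) (htop : Tendsto f atTop atTop) :
    ∃! x, x ∈ Ioi a ∧ f x = 0 := by
  obtain ⟨b, hb, hab⟩ := ((htop.eventually_gt_atTop 0).and (eventually_gt_atTop a)).exists
  obtain ⟨x, hx, hx0⟩ := intermediate_value_Ioo hab.le hf.continuousOn ⟨ha, hb⟩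
  exact existsUnique_zero_of_injOn
    ((strictMonoOn_of_deriv_pos (convex_Ici a) hf.continuousOn
      (by rwa [interior_Ici])).injOn.mono Ioi_subset_Ici_self)
    ⟨x, hx.1, hx0⟩

end ZeroCounting

theorem hasDerivAt_quartic (a₀ a₁ a₂ a₃ a₄ x : ℝ) :
    HasDerivAt (fun x => a₄ * x ^ 4 + a₃ * x ^ 3 + a₂ * x ^ 2 + a₁ * x + a₀)
      (4 * a₄ * x ^ 3 + 3 * a₃ * x ^ 2 + 2 * a₂ * x + a₁) x := by
  have h := (((((hasDerivAt_pow 4 x).const_mul a₄).add ((hasDerivAt_pow 3 x).const_mul a₃)).add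
    ((hasDerivAt_pow 2 x).const_mul a₂)).add ((hasDerivAt_id x).const_mul a₁)).add_const a₀
  exact h.congr_deriv (by push_cast; ring)

theorem tendsto_quartic_atTop {a₀ a₁ a₂ a₃ a₄ : ℝ} (ha₄ : 0 < a₄) :
    Tendsto (fun x => a₄ * x ^ 4 + a₃ * x ^ 3 + a₂ * x ^ 2 + a₁ * x + a₀) atTop atTop := by
  set P : ℝ[X] := C a₄ * X ^ 4 + C a₃ * X ^ 3 + C a₂ * X ^ 2 + C a₁ * X + C a₀
  have hP : P.natDegree = 4 := by
    simp only [P]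
    compute_degree!
    exact ha₄.ne'
  have hdeg : 0 < P.degree := natDegree_pos_iff_degree_pos.mp (by omega)
  have hlead : 0 ≤ P.leadingCoeff := by
    simpa [leadingCoeff, hP, P] using ha₄.le
  simpa [P] using P.tendsto_atTop_of_leadingCoeff_nonneg hdeg hlead

theorem quartic_four_positive_roots_general
    (a₀ a₁ a₂ a₃ a₄ : ℝ) (ha₄ : 0 < a₄) (ha₀ : 0 < a₀)
    (Fbar : ℝ → ℝ)
    (hFbar : Fbar = fun x => a₄ * x ^ 4 + a₃ * x ^ 3 + a₂ * x ^ 2 + a₁ * x + a₀)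
    (xh3 xh4 xh5 : ℝ) (hxh3pos : 0 < xh3) (h34 : xh3 < xh4) (h45 : xh4 < xh5)
    (hc₃ : deriv Fbar xh3 = 0) (hc₄ : deriv Fbar xh4 = 0) (hc₅ : deriv Fbar xh5 = 0)
    (hv₃ : Fbar xh3 < 0) (hv₄ : 0 < Fbar xh4) (hv₅ : Fbar xh5 < 0) :
    (∃! x, x ∈ Set.Ioo 0 xh3 ∧ Fbar x = 0) ∧
      (∃! x, x ∈ Set.Ioo xh3 xh4 ∧ Fbar x = 0) ∧
      (∃! x, x ∈ Set.Ioo xh4 xh5 ∧ Fbar x = 0) ∧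
      (∃! x, x ∈ Set.Ioi xh5 ∧ Fbar x = 0) := by
  have hcont : Continuous Fbar := hFbar ▸ by fun_prop
  have hderiv (x : ℝ) : deriv Fbar x = 4 * a₄ * x ^ 3 + 3 * a₃ * x ^ 2 + 2 * a₂ * x + a₁ :=
    hFbar ▸ (hasDerivAt_quartic a₀ a₁ a₂ a₃ a₄ x).deriv
  rw [hderiv] at hc₃ hc₄ hc₅
  have hfactor (x : ℝ) : deriv Fbar x = 4 * a₄ * (x - xh3) * (x - xh4) * (x - xh5) :=
    (hderiv x).trans <|
      cubic_eq_mul_sub_mul_sub_mul_sub h34.ne h45.ne (h34.trans h45).ne hc₃ hc₄ hc₅ x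
  have h4a₄ : 0 < 4 * a₄ := by linarith
  refine ⟨existsUnique_zero_Ioo_of_deriv_neg hxh3pos hcont (fun x hx => ?_) (by simpa [hFbar]) hv₃,
    existsUnique_zero_Ioo_of_deriv_pos h34 hcont (fun x hx => ?_) hv₃ hv₄,
    existsUnique_zero_Ioo_of_deriv_neg h45 hcont (fun x hx => ?_) hv₄ hv₅,
    existsUnique_zero_Ioi_of_deriv_pos hcont (fun x hx => ?_) hv₅
      (hFbar ▸ tendsto_quartic_atTop ha₄)⟩ <;>
    simp only [mem_Ioo, mem_Ioi] at hx <;> rw [hfactor]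
  · exact mul_neg_of_pos_of_neg (mul_pos_of_neg_of_neg
      (mul_neg_of_pos_of_neg h4a₄ (by linarith)) (by linarith)) (by linarith)
  · exact mul_pos_of_neg_of_neg (mul_neg_of_pos_of_neg
      (mul_pos h4a₄ (by linarith)) (by linarith)) (by linarith)
  · exact mul_neg_of_pos_of_neg (mul_pos (mul_pos h4a₄ (by linarith)) (by linarith)) (by linarith)
  · exact mul_pos (mul_pos (mul_pos h4a₄ (by linarith)) (by linarith)) (by linarith)

/-- Root counting, case C₃ᵦ(I)(Iₐ)(i) (four positive equilibria): under the stated sign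
conditions, if `xh3 < xh4 < xh5` are three positive roots of `F̄′` with `F̄(xh3) < 0`,
`F̄(xh4) > 0`, `F̄(xh5) < 0`, then `F̄` has exactly four positive roots, one in each of
`(0, xh3)`, `(xh3, xh4)`, `(xh4, xh5)`, `(xh5, ∞)`. -/
theorem quartic_four_positive_roots
    (a₀ a₁ a₂ a₃ a₄ : ℝ) (ha₄ : 0 < a₄) (ha₃ : a₃ < 0) (ha₂ : 0 < a₂)
    (hdisc : 0 < 9 * a₃ ^ 2 - 24 * a₂ * a₄) (ha₁ : a₁ < 0) (ha₀ : 0 < a₀)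
    (Fbar : ℝ → ℝ)
    (hFbar : Fbar = fun x => a₄ * x ^ 4 + a₃ * x ^ 3 + a₂ * x ^ 2 + a₁ * x + a₀)
    (xh3 xh4 xh5 : ℝ) (hxh3pos : 0 < xh3) (h34 : xh3 < xh4) (h45 : xh4 < xh5)
    (hc₃ : deriv Fbar xh3 = 0) (hc₄ : deriv Fbar xh4 = 0) (hc₅ : deriv Fbar xh5 = 0)
    (hv₃ : Fbar xh3 < 0) (hv₄ : 0 < Fbar xh4) (hv₅ : Fbar xh5 < 0) :
    (∃! x, x ∈ Set.Ioo 0 xh3 ∧ Fbar x = 0) ∧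
      (∃! x, x ∈ Set.Ioo xh3 xh4 ∧ Fbar x = 0) ∧
      (∃! x, x ∈ Set.Ioo xh4 xh5 ∧ Fbar x = 0) ∧
      (∃! x, x ∈ Set.Ioi xh5 ∧ Fbar x = 0) :=
  quartic_four_positive_roots_general a₀ a₁ a₂ a₃ a₄ ha₄ ha₀ Fbar hFbar xh3 xh4 xh5 hxh3pos h34 h45
    hc₃ hc₄ hc₅ hv₃ hv₄ hv₅
end
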